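/- Let A ⊆ ℝ² be compact with 0 ∈ int(A), and suppose κ₁, κ₂ ∈ L^p([0,L];ℝ) satisfy the constraint max_{(ζ₁,ζ₂)∈A} (ζ₁ κ₂(s) − ζ₂ κ₁(s)) ≤ 1 for a.e. s. If δ > 0 is such that the closed square of side 6δ centered at some (ζ̄₁,ζ̄₂) is contained in int(A), then 1 + ζ₂ κ₁(s) − ζ₁ κ₂(s) ≥ 2δ(|κ₁(s)| + |κ₂(s)|) for a.e. s and all (ζ₁,ζ₂) with |ζ₁−ζ̄₁| < δ, |ζ₂−ζ̄₂| < δ. -/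

import Mathlib

open MeasureTheory Set

/-!
Test the constraint at the point `ζ + 2δ (sign κ₂, -sign κ₁)`: it lies within `3δ` of `ζ̄` in each
coordinate, hence in `A`, and there the constraint reads
`ζ₁κ₂ - ζ₂κ₁ + 2δ (|κ₁| + |κ₂|) ≤ 1`.
-/

theorem coe_sign_mem_Icc (x : ℝ) : (SignType.sign x : ℝ) ∈ Icc (-1) 1 := by
  rcases lt_trichotomy x 0 with h | rfl | h <;> simp [*]

theorem add_mul_mem_Icc {c t s : ℝ} (ht : 0 ≤ t) (hs : s ∈ Icc (-1) 1) :
    c + t * s ∈ Icc (c - t) (c + t) := by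
  obtain ⟨hs₁, hs₂⟩ := hs
  constructor <;> nlinarith

theorem add_mul_abs_le_one_of_Icc_prod_Icc_subset {S : Set (ℝ × ℝ)} {k₁ k₂ ζ₁ ζ₂ t : ℝ}
    (ht : 0 ≤ t) (hS : ∀ η ∈ S, η.1 * k₂ - η.2 * k₁ ≤ 1)
    (hbox : Icc (ζ₁ - t) (ζ₁ + t) ×ˢ Icc (ζ₂ - t) (ζ₂ + t) ⊆ S) :
    ζ₁ * k₂ - ζ₂ * k₁ + t * (|k₁| + |k₂|) ≤ 1 := by
  have hmem : (ζ₁ + t * SignType.sign k₂, ζ₂ + t * SignType.sign (-k₁)) ∈ S :=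
    hbox ⟨add_mul_mem_Icc ht (coe_sign_mem_Icc _), add_mul_mem_Icc ht (coe_sign_mem_Icc _)⟩
  calc ζ₁ * k₂ - ζ₂ * k₁ + t * (|k₁| + |k₂|)
      = (ζ₁ + t * SignType.sign k₂) * k₂ - (ζ₂ + t * SignType.sign (-k₁)) * k₁ := by
        rw [← abs_neg k₁, ← sign_mul_self k₂, ← sign_mul_self (-k₁)]
        ring
    _ ≤ 1 := hS _ hmem

theorem Icc_sub_add_subset_Icc_sub_add {x y a b : ℝ} (h : a + |x - y| ≤ b) :
    Icc (x - a) (x + a) ⊆ Icc (y - b) (y + b) := by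
  simp only [← Real.closedBall_eq_Icc]
  exact Metric.closedBall_subset_closedBall' (by rwa [Real.dist_eq])

theorem stmt7_general (L : ℝ) (A : Set (ℝ × ℝ)) (κ₁ κ₂ : ℝ → ℝ)
    (hni : ∀ᵐ s ∂(volume.restrict (Set.Icc 0 L)),
      ∀ ζ ∈ A, ζ.1 * κ₂ s - ζ.2 * κ₁ s ≤ 1)
    (δ zb₁ zb₂ : ℝ)
    (hsq : Set.Icc (zb₁ - 3 * δ) (zb₁ + 3 * δ) ×ˢ Set.Icc (zb₂ - 3 * δ) (zb₂ + 3 * δ)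
      ⊆ interior A) :
    ∀ᵐ s ∂(volume.restrict (Set.Icc 0 L)), ∀ ζ₁ ζ₂ : ℝ,
      |ζ₁ - zb₁| < δ → |ζ₂ - zb₂| < δ →
      2 * δ * (|κ₁ s| + |κ₂ s|) ≤ 1 + ζ₂ * κ₁ s - ζ₁ * κ₂ s := by
  filter_upwards [hni] with s hs ζ₁ ζ₂ h₁ h₂
  have hbox : Icc (ζ₁ - 2 * δ) (ζ₁ + 2 * δ) ×ˢ Icc (ζ₂ - 2 * δ) (ζ₂ + 2 * δ) ⊆ A :=
    ((Set.prod_mono (Icc_sub_add_subset_Icc_sub_add (by linarith))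
      (Icc_sub_add_subset_Icc_sub_add (by linarith))).trans hsq).trans interior_subset
  have hδ : 0 ≤ 2 * δ := by linarith [abs_nonneg (ζ₁ - zb₁)]
  linarith [add_mul_abs_le_one_of_Icc_prod_Icc_subset hδ hs hbox]

/-- if the local non-interpenetration constraint
`max_{(ζ₁,ζ₂)∈A} (ζ₁κ₂(s) − ζ₂κ₁(s)) ≤ 1` holds a.e. and the closed square of
side `6δ` centered at `(ζ̄₁,ζ̄₂)` is contained in `int(A)`, then
`1 + ζ₂κ₁(s) − ζ₁κ₂(s) ≥ 2δ(|κ₁(s)| + |κ₂(s)|)` for a.e. `s` and all `(ζ₁,ζ₂)`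
with `|ζ₁−ζ̄₁| < δ`, `|ζ₂−ζ̄₂| < δ`. -/
theorem stmt7 (L p : ℝ) (hL : 0 < L) (hp : 1 < p)
    (A : Set (ℝ × ℝ)) (hAc : IsCompact A) (hA0 : (0, 0) ∈ interior A)
    (κ₁ κ₂ : ℝ → ℝ)
    (hκ₁ : MemLp κ₁ (ENNReal.ofReal p) (volume.restrict (Set.Icc 0 L)))
    (hκ₂ : MemLp κ₂ (ENNReal.ofReal p) (volume.restrict (Set.Icc 0 L)))
    (hni : ∀ᵐ s ∂(volume.restrict (Set.Icc 0 L)),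
      ∀ ζ ∈ A, ζ.1 * κ₂ s - ζ.2 * κ₁ s ≤ 1)
    (δ zb₁ zb₂ : ℝ) (hδ : 0 < δ)
    (hsq : Set.Icc (zb₁ - 3 * δ) (zb₁ + 3 * δ) ×ˢ Set.Icc (zb₂ - 3 * δ) (zb₂ + 3 * δ)
      ⊆ interior A) :
    ∀ᵐ s ∂(volume.restrict (Set.Icc 0 L)), ∀ ζ₁ ζ₂ : ℝ,
      |ζ₁ - zb₁| < δ → |ζ₂ - zb₂| < δ →
      2 * δ * (|κ₁ s| + |κ₂ s|) ≤ 1 + ζ₂ * κ₁ s - ζ₁ * κ₂ s :=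
  stmt7_general L A κ₁ κ₂ hni δ zb₁ zb₂ hsq
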